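/- Let E be a real normed vector space of dimension 2 (finrank ℝ E = 2), let α : Multiset ℝ → ℝ be a cost function, let P be a finite subset of E, and let k be a natural number. Suppose (ℓ₁-optimizability) there exist a finite set S* ⊂ E with |S*| ≤ k and a spanning tree T* of P ∪ S* such that (a) the α-cost of T* is less than or equal to the α-cost of τ for every finite S ⊂ E with |S| ≤ k and every spanning tree τ of P ∪ S, and (b) T* has minimum total edge length among all spanning trees of P ∪ S*. Then every spanning tree of P ∪ S* of minimum total edge length has α-cost equal to the α-cost of T*; that is, every minimum spanning tree of P ∪ S* is a minimum k-Steiner tree of P with respect to α. -/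

import Mathlib

open scoped BigOperators

noncomputable section

variable {E : Type*} [NormedAddCommGroup E]

/-- The length of an edge (an unordered pair of points): the norm distance
`‖x - z‖` between its endpoints. -/
def edgeLen : Sym2 E → ℝ :=
  Sym2.lift ⟨fun a b => dist a b, fun a b => dist_comm a b⟩

/-- The total length of a graph: the sum of the lengths of its edges. -/
def glength (G : SimpleGraph E) : ℝ := ∑ᶠ e ∈ G.edgeSet, edgeLen e

/-- `G` is a spanning tree of the point set `V`: all its edges join points of
`V`, it is acyclic, and all points of `V` are pairwise connected in `G`. -/
def IsSpanningTreeOn (V : Set E) (G : SimpleGraph E) : Prop :=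
  (∀ ⦃x y : E⦄, G.Adj x y → x ∈ V ∧ y ∈ V) ∧ G.IsAcyclic ∧
    ∀ x ∈ V, ∀ y ∈ V, G.Reachable x y

open Classical in
/-- The `α`-cost of a graph: `α` applied to the multiset of its edge lengths
(junk value `0` if the edge set is infinite, which never occurs for spanning
trees of finite sets). -/
def gcost (α : Multiset ℝ → ℝ) (G : SimpleGraph E) : ℝ :=
  if h : G.edgeSet.Finite then α (h.toFinset.val.map edgeLen) else 0

/-!
All minimum spanning trees of a finite point set have the same multiset of edge lengths, so
the `α`-cost of a minimum spanning tree of `P ∪ S*` does not depend on which one is chosen.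
This is the classical exchange argument: if `e` is an edge of the minimum spanning tree `T`
missing from the minimum spanning tree `T'`, the `T'`-path between the ends of `e` crosses the
cut of `T - e` along some edge `f`; both `T - e + f` and `T' - f + e` are spanning trees, so
minimality of `T` and `T'` forces `|e| = |f|`, and `T' - f + e` is a minimum spanning tree
with the same edge lengths as `T'` and one more edge in common with `T`.
-/

open SimpleGraph

section Graph

variable {V : Type*} {G H T T' : SimpleGraph V} {A : Set V} {f : Sym2 V} {u v x y : V}

theorem SimpleGraph.reachable_le_of_adj_le (h : G.Adj ≤ H.Reachable) :
    G.Reachable ≤ H.Reachable := by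
  simp only [reachable_eq_reflTransGen] at h ⊢
  exact Relation.reflTransGen_closed h

theorem SimpleGraph.Reachable.deleteEdges_reachable_or {w : V} (v : V) (h : G.Reachable w u) :
    (G.deleteEdges {s(u, v)}).Reachable w u ∨ (G.deleteEdges {s(u, v)}).Reachable w v := by
  rw [reachable_iff_reflTransGen] at h
  induction h using Relation.ReflTransGen.head_induction_on with
  | refl => exact .inl .rfl
  | @head w a hadj _ ih =>
    by_cases hf : s(w, a) = s(u, v)
    · rcases Sym2.eq_iff.1 hf with ⟨rfl, -⟩ | ⟨rfl, -⟩
      exacts [.inl .rfl, .inr .rfl]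
    · have hadj' : (G.deleteEdges {s(u, v)}).Adj w a := by simp [hadj, hf]
      exact ih.imp hadj'.reachable.trans hadj'.reachable.trans

theorem SimpleGraph.IsAcyclic.not_reachable_deleteEdges_of_mem_edges (hG : G.IsAcyclic)
    (p : G.Path x y) (huv : s(u, v) ∈ (p : G.Walk x y).edges) :
    ¬(G.deleteEdges {s(u, v)}).Reachable x y := by
  classical
  rw [reachable_deleteEdges_iff_exists_walk]
  rintro ⟨q, hq⟩
  rw [(hG.subsingleton_path x y).elim p q.toPath] at huv
  exact hq (q.edges_toPath_subset_edges huv)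

theorem SimpleGraph.Walk.exists_mem_edges_not_reachable (p : G.Walk x y)
    (h : ¬H.Reachable x y) : ∃ u v, s(u, v) ∈ p.edges ∧ ¬H.Reachable u v := by
  obtain ⟨d, hd, hx, hy⟩ := p.exists_boundary_dart {w | H.Reachable x w} .rfl h
  exact ⟨d.fst, d.snd, List.mem_map_of_mem hd, fun h' => hy (hx.trans h')⟩

theorem SimpleGraph.edgeSet_deleteEdges_sup_edge (hxy : x ≠ y) :
    (G.deleteEdges {f} ⊔ edge x y).edgeSet = insert s(x, y) (G.edgeSet \ {f}) := by
  rw [edgeSet_sup, edgeSet_deleteEdges, edgeSet_edge_of_ne hxy, Set.union_singleton]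

theorem SimpleGraph.ncard_edgeSet_deleteEdges_sup_edge_sdiff_lt (hG : G.edgeSet.Finite)
    (hf : f ∈ G.edgeSet) (hfH : f ∉ H.edgeSet) (hxy : H.Adj x y) :
    ((G.deleteEdges {f} ⊔ edge x y).edgeSet \ H.edgeSet).ncard < (G.edgeSet \ H.edgeSet).ncard := by
  rw [edgeSet_deleteEdges_sup_edge hxy.ne, Set.insert_sdiff_of_mem _ (H.mem_edgeSet.2 hxy),
    sdiff_right_comm]
  exact Set.ncard_sdiff_singleton_lt_of_mem ⟨hf, hfH⟩ hG.sdiff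

theorem IsSpanningTreeOn.edgeSet_finite (hT : IsSpanningTreeOn A T) (hA : A.Finite) :
    T.edgeSet.Finite := by
  refine ((hA.prod hA).image fun p => s(p.1, p.2)).subset fun e he => ?_
  induction e using Sym2.ind with
  | _ a b => exact ⟨(a, b), hT.1 he, rfl⟩

theorem IsSpanningTreeOn.eq_of_le (hT : IsSpanningTreeOn A T) (hT' : IsSpanningTreeOn A T')
    (h : T ≤ T') : T = T' := by
  refine le_antisymm h fun a b hab => ?_
  by_contra hnab
  have hle : T ≤ T'.deleteEdges {s(a, b)} :=
    (deleteEdges_eq_self.2 (by simpa using hnab)).ge.trans (deleteEdges_mono h)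
  exact isAcyclic_iff_forall_adj_isBridge.1 hT'.2.1 hab
    ((hT.2.2 a (hT'.1 hab).1 b (hT'.1 hab).2).mono hle)

theorem IsSpanningTreeOn.deleteEdges_sup_edge (hT : IsSpanningTreeOn A T) (huv : T.Adj u v)
    (hx : x ∈ A) (hy : y ∈ A) (hxy : ¬(T.deleteEdges {s(u, v)}).Reachable x y) :
    IsSpanningTreeOn A (T.deleteEdges {s(u, v)} ⊔ edge x y) := by
  set D := T.deleteEdges {s(u, v)}
  have hDle : D ≤ D ⊔ edge x y := le_sup_left
  have hxy' : (D ⊔ edge x y).Adj x y :=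
    .inr ((edge_adj ..).2 ⟨.inl ⟨rfl, rfl⟩, fun h => hxy (h ▸ .rfl)⟩)
  refine ⟨fun c d hcd => ?_, (hT.2.1.anti (deleteEdges_le _)).sup_edge_of_not_reachable hxy, ?_⟩
  · rcases hcd with hcd | hcd
    · exact hT.1 (deleteEdges_le _ hcd)
    · rcases ((edge_adj ..).1 hcd).1 with ⟨rfl, rfl⟩ | ⟨rfl, rfl⟩
      exacts [⟨hx, hy⟩, ⟨hy, hx⟩]
  have hu : u ∈ A := (hT.1 huv).1
  -- `x` and `y` lie on different sides of the cut of `T - uv`, so `xy` reconnects `u` and `v`.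
  have huv' : (D ⊔ edge x y).Reachable u v := by
    rcases (hT.2.2 x hx u hu).deleteEdges_reachable_or v with hxu | hxv <;>
      rcases (hT.2.2 y hy u hu).deleteEdges_reachable_or v with hyu | hyv
    · exact absurd (hxu.trans hyu.symm) hxy
    · exact (hxu.mono hDle).symm.trans (hxy'.reachable.trans (hyv.mono hDle))
    · exact (hyu.mono hDle).symm.trans (hxy'.reachable.symm.trans (hxv.mono hDle))
    · exact absurd (hxv.trans hyv.symm) hxy
  intro a ha b hb
  refine reachable_le_of_adj_le (fun c d hcd => ?_) a b (hT.2.2 a ha b hb)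
  by_cases hf : s(c, d) = s(u, v)
  · rcases Sym2.eq_iff.1 hf with ⟨rfl, rfl⟩ | ⟨rfl, rfl⟩
    exacts [huv', huv'.symm]
  · exact Adj.reachable (.inl (by simp [D, hcd, hf]))

theorem IsSpanningTreeOn.exists_exchange (hT : IsSpanningTreeOn A T)
    (hT' : IsSpanningTreeOn A T') (hxy : T.Adj x y) :
    ∃ u v, T'.Adj u v ∧ ¬(T.deleteEdges {s(x, y)}).Reachable u v ∧
      IsSpanningTreeOn A (T.deleteEdges {s(x, y)} ⊔ edge u v) ∧
      IsSpanningTreeOn A (T'.deleteEdges {s(u, v)} ⊔ edge x y) := by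
  classical
  obtain ⟨hx, hy⟩ := hT.1 hxy
  have hcut : ¬(T.deleteEdges {s(x, y)}).Reachable x y :=
    isAcyclic_iff_forall_adj_isBridge.1 hT.2.1 hxy
  obtain ⟨p⟩ := hT'.2.2 x hx y hy
  obtain ⟨u, v, huv, hnuv⟩ := (p.toPath : T'.Walk x y).exists_mem_edges_not_reachable hcut
  have huv' : T'.Adj u v := Walk.adj_of_mem_edges _ huv
  exact ⟨u, v, huv', hnuv, hT.deleteEdges_sup_edge hxy (hT'.1 huv').1 (hT'.1 huv').2 hnuv,
    hT'.deleteEdges_sup_edge huv' hx hy (hT'.2.1.not_reachable_deleteEdges_of_mem_edges _ huv)⟩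

end Graph

section Length

variable {G : SimpleGraph E} {f : Sym2 E} {x y : E}

theorem glength_deleteEdges_sup_edge (hG : G.edgeSet.Finite) (hf : f ∈ G.edgeSet)
    (he : s(x, y) ∉ G.edgeSet) (hxy : x ≠ y) :
    glength (G.deleteEdges {f} ⊔ edge x y) = glength G - edgeLen f + edgeLen s(x, y) := by
  have hsplit : ∑ᶠ e ∈ G.edgeSet, edgeLen e = edgeLen f + ∑ᶠ e ∈ G.edgeSet \ {f}, edgeLen e := by
    rw [← finsum_mem_insert edgeLen (s := G.edgeSet \ {f}) (by simp) hG.sdiff,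
      Set.insert_sdiff_singleton, Set.insert_eq_of_mem hf]
  rw [glength, glength, edgeSet_deleteEdges_sup_edge hxy,
    finsum_mem_insert edgeLen (by simp [he]) hG.sdiff, hsplit]
  ring

theorem gcost_deleteEdges_sup_edge (α : Multiset ℝ → ℝ) (hG : G.edgeSet.Finite)
    (hf : f ∈ G.edgeSet) (he : s(x, y) ∉ G.edgeSet) (hxy : x ≠ y)
    (hlen : edgeLen f = edgeLen s(x, y)) :
    gcost α (G.deleteEdges {f} ⊔ edge x y) = gcost α G := by
  classical
  have hG' : (G.deleteEdges {f} ⊔ edge x y).edgeSet.Finite := by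
    rw [edgeSet_deleteEdges_sup_edge hxy]
    exact hG.sdiff.insert _
  have hfin : hG'.toFinset = insert s(x, y) (hG.toFinset.erase f) := by
    ext e
    simp [edgeSet_deleteEdges_sup_edge hxy, and_comm]
  rw [gcost, gcost, dif_pos hG', dif_pos hG, hfin, Finset.insert_val_of_notMem (by simp [he]),
    Finset.erase_val, Multiset.map_cons, ← hlen, ← Multiset.map_cons,
    Multiset.cons_erase (by simpa using hf)]

end Length

def IsMinSpanningTreeOn (A : Set E) (T : SimpleGraph E) : Prop :=
  IsSpanningTreeOn A T ∧ ∀ τ : SimpleGraph E, IsSpanningTreeOn A τ → glength T ≤ glength τ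

namespace IsMinSpanningTreeOn

variable {A : Set E} {T : SimpleGraph E}

theorem exists_exchange (hA : A.Finite) {T' : SimpleGraph E} {x y : E}
    (hT : IsMinSpanningTreeOn A T) (hT' : IsMinSpanningTreeOn A T') (hxy : T.Adj x y) (hxy' : ¬T'.Adj x y) :
    ∃ u v, T'.Adj u v ∧ ¬T.Adj u v ∧ edgeLen s(u, v) = edgeLen s(x, y) ∧
      IsMinSpanningTreeOn A (T'.deleteEdges {s(u, v)} ⊔ edge x y) := by
  obtain ⟨u, v, huv, hcut, hT₁, hT₂⟩ := hT.1.exists_exchange hT'.1 hxy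
  have huv' : ¬T.Adj u v := fun h => hcut <| Adj.reachable <| (deleteEdges_adj ..).2
    ⟨h, fun he => hxy' (Set.mem_singleton_iff.1 he ▸ huv : s(x, y) ∈ T'.edgeSet)⟩
  have hlen₁ := glength_deleteEdges_sup_edge (hT.1.edgeSet_finite hA) (T.mem_edgeSet.2 hxy)
    huv' huv.ne
  have hlen₂ := glength_deleteEdges_sup_edge (hT'.1.edgeSet_finite hA) (T'.mem_edgeSet.2 huv)
    hxy' hxy.ne
  have hlen : edgeLen s(u, v) = edgeLen s(x, y) := by
    linarith [hT.2 _ hT₁, hT'.2 _ hT₂]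
  refine ⟨u, v, huv, huv', hlen, hT₂, fun τ hτ => ?_⟩
  rw [hlen₂, hlen, sub_add_cancel]
  exact hT'.2 τ hτ

theorem gcost_eq (hA : A.Finite) (α : Multiset ℝ → ℝ) {T' : SimpleGraph E}
    (hT : IsMinSpanningTreeOn A T) (hT' : IsMinSpanningTreeOn A T') : gcost α T' = gcost α T := by
  by_cases hle : T ≤ T'
  · rw [hT.1.eq_of_le hT'.1 hle]
  obtain ⟨x, y, hxy, hxy'⟩ : ∃ x y, T.Adj x y ∧ ¬T'.Adj x y := by
    by_contra! h
    exact hle fun x y => h x y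
  obtain ⟨u, v, huv, huv', hlen, hT₁⟩ := hT.exists_exchange hA hT' hxy hxy'
  have hfin := hT'.1.edgeSet_finite hA
  rw [← gcost_deleteEdges_sup_edge α hfin huv hxy' hxy.ne hlen]
  exact gcost_eq hA α hT hT₁
termination_by (T'.edgeSet \ T.edgeSet).ncard
decreasing_by
  exact ncard_edgeSet_deleteEdges_sup_edge_sdiff_lt hfin huv huv' hxy

end IsMinSpanningTreeOn

theorem stmt17_general (E : Type*) [NormedAddCommGroup E]
    (α : Multiset ℝ → ℝ) (P : Finset E) (k : ℕ)
    (Sstar : Finset E)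
    (Tstar : SimpleGraph E) (hTstar : IsSpanningTreeOn (↑P ∪ ↑Sstar) Tstar)
    -- (a) `Tstar` has minimum `α`-cost among all `k`-Steiner trees of `P`
    (ha : ∀ S : Finset E, S.card ≤ k → ∀ τ : SimpleGraph E,
      IsSpanningTreeOn (↑P ∪ ↑S) τ → gcost α Tstar ≤ gcost α τ)
    -- (b) `Tstar` has minimum total length among spanning trees of `P ∪ Sstar`
    (hb : ∀ τ : SimpleGraph E,
      IsSpanningTreeOn (↑P ∪ ↑Sstar) τ → glength Tstar ≤ glength τ) :
    -- every minimum spanning tree of `P ∪ Sstar` has `α`-cost equal to that of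
    -- `Tstar`, i.e. it is a minimum `k`-Steiner tree of `P` with respect to `α`
    ∀ τ : SimpleGraph E, IsSpanningTreeOn (↑P ∪ ↑Sstar) τ →
      (∀ τ' : SimpleGraph E, IsSpanningTreeOn (↑P ∪ ↑Sstar) τ' →
        glength τ ≤ glength τ') →
      gcost α τ = gcost α Tstar ∧
        ∀ S : Finset E, S.card ≤ k → ∀ τ'' : SimpleGraph E,
          IsSpanningTreeOn (↑P ∪ ↑S) τ'' → gcost α τ ≤ gcost α τ'' := by
  intro τ hτ hτmin
  have hcost : gcost α τ = gcost α Tstar :=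
    IsMinSpanningTreeOn.gcost_eq (P.finite_toSet.union Sstar.finite_toSet) α ⟨hTstar, hb⟩
      ⟨hτ, hτmin⟩
  exact ⟨hcost, fun S hS τ'' hτ'' => hcost ▸ ha S hS τ'' hτ''⟩

theorem stmt17 (E : Type*) [NormedAddCommGroup E] [NormedSpace ℝ E]
    (hdim : Module.finrank ℝ E = 2)
    (α : Multiset ℝ → ℝ) (P : Finset E) (k : ℕ)
    (Sstar : Finset E) (hSk : Sstar.card ≤ k)
    (Tstar : SimpleGraph E) (hTstar : IsSpanningTreeOn (↑P ∪ ↑Sstar) Tstar)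
    -- (a) `Tstar` has minimum `α`-cost among all `k`-Steiner trees of `P`
    (ha : ∀ S : Finset E, S.card ≤ k → ∀ τ : SimpleGraph E,
      IsSpanningTreeOn (↑P ∪ ↑S) τ → gcost α Tstar ≤ gcost α τ)
    -- (b) `Tstar` has minimum total length among spanning trees of `P ∪ Sstar`
    (hb : ∀ τ : SimpleGraph E,
      IsSpanningTreeOn (↑P ∪ ↑Sstar) τ → glength Tstar ≤ glength τ) :
    -- every minimum spanning tree of `P ∪ Sstar` has `α`-cost equal to that of
    -- `Tstar`, i.e. it is a minimum `k`-Steiner tree of `P` with respect to `α`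
    ∀ τ : SimpleGraph E, IsSpanningTreeOn (↑P ∪ ↑Sstar) τ →
      (∀ τ' : SimpleGraph E, IsSpanningTreeOn (↑P ∪ ↑Sstar) τ' →
        glength τ ≤ glength τ') →
      gcost α τ = gcost α Tstar ∧
        ∀ S : Finset E, S.card ≤ k → ∀ τ'' : SimpleGraph E,
          IsSpanningTreeOn (↑P ∪ ↑S) τ'' → gcost α τ ≤ gcost α τ'' :=
  stmt17_general E α P k Sstar Tstar hTstar ha hb
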